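/- arXiv:1908.10938 — 3 statements merged into one kernel-verified Lean document; each statement's English description precedes it below -/
import Mathlib

section
/- Let 0 ≤ r ≤ N and 0 ≤ s ≤ d−N be integers, and let c be a self-consistent N-fermion coefficient vector for the setting (N,d) whose natural occupation numbers are non-increasingly ordered, n_1 ≥ n_2 ≥ … ≥ n_d. Define the Pauli-constraint functional S^{(r,s)}(x) := ∑_{i=1}^{r} (1 − x_i) + ∑_{j=d−s+1}^{d} x_j. Then S^{(r,s)}(n_1,…,n_d) = 0 holds if and only if S^{(r,s)}(n_S)·c(S) = 0 for every N-element subset S of {1,…,d}, i.e. the state lies in the zero-eigenspace of the natural-orbital-induced operator Ŝ^{(r,s)}. -/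
open Finset

noncomputable section

/-- The set of all `N`-element subsets of `{1,…,d}` (modelled as `Fin d`). -/
def configs (d N : ℕ) : Finset (Finset (Fin d)) :=
  Finset.univ.filter fun S => S.card = N

/-- The sign `ε(k,R) = (−1)^{#{r ∈ R : r < k}}`. -/
def eps {d : ℕ} (k : Fin d) (R : Finset (Fin d)) : ℂ :=
  (-1 : ℂ) ^ (R.filter fun r => r < k).card

/-- The one-particle reduced density matrix of an `N`-fermion coefficient vector `c`. -/
def rho {d : ℕ} (N : ℕ) (c : Finset (Fin d) → ℂ) : Matrix (Fin d) (Fin d) ℂ :=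
  Matrix.of fun i j =>
    ∑ S ∈ (configs d N).filter (fun S => i ∈ S ∧ j ∉ S.erase i),
      eps i S * eps j (insert j (S.erase i)) *
        (starRingEnd ℂ) (c (insert j (S.erase i))) * c S

/-- Normalization `∑_S |c(S)|² = 1` over all `N`-element subsets `S`. -/
def normalized {d : ℕ} (N : ℕ) (c : Finset (Fin d) → ℂ) : Prop :=
  ∑ S ∈ configs d N, ‖c S‖ ^ 2 = 1

/-- Self-consistency: the one-particle reduced density matrix is diagonal. -/
def selfConsistent {d : ℕ} (N : ℕ) (c : Finset (Fin d) → ℂ) : Prop :=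
  ∀ i j : Fin d, i ≠ j → rho N c i j = 0

/-- The natural occupation numbers `n_j = ρ(c)_{jj}` (real parts of the diagonal). -/
def occ {d : ℕ} (N : ℕ) (c : Finset (Fin d) → ℂ) (j : Fin d) : ℝ :=
  (rho N c j j).re

/-- The occupation vector `n_S ∈ {0,1}^d` of a configuration `S`. -/
def occVec {d : ℕ} (S : Finset (Fin d)) (j : Fin d) : ℝ :=
  if j ∈ S then 1 else 0

/-- `lam` is the list of eigenvalues of `ρ(c)` in non-increasing order. -/
def isOrderedSpectrum {d : ℕ} (N : ℕ) (c : Finset (Fin d) → ℂ) (lam : Fin d → ℝ) : Prop :=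
  (∀ i j : Fin d, i ≤ j → lam j ≤ lam i) ∧
  ∃ (h : (rho N c).IsHermitian) (σ : Equiv.Perm (Fin d)), ∀ i, lam i = h.eigenvalues (σ i)

/-- `x ↦ κ₀ + ∑_j κ_j x_j` is a valid generalized Pauli constraint for the setting `(N,d)`. -/
def IsGPC {d : ℕ} (N : ℕ) (κ₀ : ℝ) (κ : Fin d → ℝ) : Prop :=
  ∀ c : Finset (Fin d) → ℂ, normalized N c →
    ∀ lam : Fin d → ℝ, isOrderedSpectrum N c lam →
      0 ≤ κ₀ + ∑ j, κ j * lam j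

/-- The Pauli-constraint functional `S^{(r,s)}(x) = ∑_{i=1}^{r}(1−x_i) + ∑_{j=d−s+1}^{d} x_j`
(indices written 0-based). -/
def PauliS (d r s : ℕ) (x : Fin d → ℝ) : ℝ :=
  (∑ i ∈ Finset.univ.filter (fun i : Fin d => (i : ℕ) < r), (1 - x i)) +
  (∑ j ∈ Finset.univ.filter (fun j : Fin d => d - s ≤ (j : ℕ)), x j)


lemma occ_eq {d N : ℕ} (c : Finset (Fin d) → ℂ) (j : Fin d) :
    occ N c j = ∑ S ∈ (configs d N).filter (fun S => j ∈ S), ‖c S‖ ^ 2 := by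
  have hrho : rho N c j j
      = ∑ S ∈ (configs d N).filter (fun S => j ∈ S), ((‖c S‖ ^ 2 : ℝ) : ℂ) := by
    rw [rho]
    simp only [Matrix.of_apply]
    rw [show ((configs d N).filter (fun S => j ∈ S ∧ j ∉ S.erase j))
        = (configs d N).filter (fun S => j ∈ S) by
      apply Finset.filter_congr; intro S _; simp [Finset.notMem_erase]]
    refine Finset.sum_congr rfl ?_
    intro S hS
    have hj : j ∈ S := (Finset.mem_filter.1 hS).2
    rw [Finset.insert_erase hj]
    have heps : eps j S * eps j S = 1 := by
      rw [eps, ← pow_add, ← two_mul, pow_mul]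
      norm_num
    rw [heps, one_mul]
    have : (starRingEnd ℂ) (c S) * c S = (Complex.normSq (c S) : ℂ) := by
      rw [mul_comm, Complex.mul_conj]
    rw [this, Complex.normSq_eq_norm_sq]
  rw [occ, hrho]
  rw [show (∑ S ∈ (configs d N).filter (fun S => j ∈ S), ((‖c S‖ ^ 2 : ℝ) : ℂ))
      = (((∑ S ∈ (configs d N).filter (fun S => j ∈ S), ‖c S‖ ^ 2 : ℝ)) : ℂ) by
    push_cast; rfl]
  exact Complex.ofReal_re _

lemma occ_eq' {d N : ℕ} (c : Finset (Fin d) → ℂ) (j : Fin d) :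
    occ N c j = ∑ S ∈ configs d N, ‖c S‖ ^ 2 * occVec S j := by
  rw [occ_eq, Finset.sum_filter]
  refine Finset.sum_congr rfl ?_
  intro S _
  by_cases h : j ∈ S <;> simp [occVec, h]

lemma pauli_decomp {d N : ℕ} {r s : ℕ} (c : Finset (Fin d) → ℂ) (hnorm : normalized N c) :
    PauliS d r s (occ N c)
      = ∑ S ∈ configs d N, ‖c S‖ ^ 2 * PauliS d r s (occVec S) := by
  have h1 : ∀ i : Fin d, 1 - occ N c i
      = ∑ S ∈ configs d N, ‖c S‖ ^ 2 * (1 - occVec S i) := by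
    intro i
    rw [occ_eq',
      show (∑ S ∈ configs d N, ‖c S‖ ^ 2 * (1 - occVec S i))
        = ∑ S ∈ configs d N, (‖c S‖ ^ 2 - ‖c S‖ ^ 2 * occVec S i)
        from Finset.sum_congr rfl (fun S _ => by ring),
      Finset.sum_sub_distrib, hnorm]
  unfold PauliS
  rw [Finset.sum_congr rfl (fun i _ => h1 i),
    Finset.sum_congr rfl (fun j _ => occ_eq' (N := N) c j),
    Finset.sum_comm, Finset.sum_comm
      (s := Finset.univ.filter (fun j : Fin d => d - s ≤ (j : ℕ))),
    ← Finset.sum_add_distrib]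
  refine Finset.sum_congr rfl fun S _ => ?_
  rw [mul_add, Finset.mul_sum, Finset.mul_sum]

lemma pauli_nonneg {d : ℕ} (r s : ℕ) (S : Finset (Fin d)) : 0 ≤ PauliS d r s (occVec S) := by
  unfold PauliS
  have h1 : ∀ j : Fin d, 0 ≤ occVec S j := by
    intro j; unfold occVec; split <;> norm_num
  have h2 : ∀ j : Fin d, occVec S j ≤ 1 := by
    intro j; unfold occVec; split <;> norm_num
  have := Finset.sum_nonneg (s := Finset.univ.filter (fun i : Fin d => (i : ℕ) < r))
    (fun i _ => by linarith [h2 i] : ∀ i ∈ _, (0:ℝ) ≤ 1 - occVec S i)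
  have := Finset.sum_nonneg (s := Finset.univ.filter (fun j : Fin d => d - s ≤ (j : ℕ)))
    (fun j _ => h1 j)
  linarith

theorem stmt0 {d N : ℕ} (hN : 0 < N) (hNd : N ≤ d) {r s : ℕ} (hr : r ≤ N) (hs : s ≤ d - N)
    (c : Finset (Fin d) → ℂ) (hnorm : normalized N c) (hsc : selfConsistent N c)
    (hord : ∀ i j : Fin d, i ≤ j → occ N c j ≤ occ N c i) :
    PauliS d r s (occ N c) = 0 ↔
      ∀ S ∈ configs d N, (PauliS d r s (occVec S) : ℂ) * c S = 0 := by
  have key := pauli_decomp (r := r) (s := s) c hnorm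
  constructor
  · intro h0 S hS
    rw [key] at h0
    have hall := (Finset.sum_eq_zero_iff_of_nonneg (fun S _ =>
      mul_nonneg (by positivity) (pauli_nonneg r s S))).1 h0 S hS
    rcases mul_eq_zero.1 hall with h | h
    · have : c S = 0 := by
        have := pow_eq_zero_iff (n := 2) (by norm_num) |>.1 h
        simpa using norm_eq_zero.1 this
      simp [this]
    · rw [h]; simp
  · intro h
    rw [key]
    refine Finset.sum_eq_zero ?_
    intro S hS
    rcases mul_eq_zero.1 (h S hS) with h' | h'
    · have : PauliS d r s (occVec S) = 0 := by exact_mod_cast h'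
      rw [this, mul_zero]
    · simp [h']
end
end

section
/- Let 0 ≤ r ≤ N and 0 ≤ s ≤ d−N be integers, and let c be a self-consistent N-fermion coefficient vector for the setting (N,d) whose natural occupation numbers are non-increasingly ordered, n_1 ≥ n_2 ≥ … ≥ n_d, and suppose S^{(r,s)}(n_1,…,n_d) = 0, where S^{(r,s)}(x) := ∑_{i=1}^{r} (1 − x_i) + ∑_{j=d−s+1}^{d} x_j. Then c(S) = 0 for every N-element subset S of {1,…,d} that either fails to contain all of the orbitals 1,…,r or contains some orbital from {d−s+1,…,d}; equivalently, only configurations including all natural orbitals 1,…,r and excluding the natural orbitals d−s+1,…,d may contribute to the natural orbital expansion. -/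
open Finset

noncomputable section

theorem stmt1 {d N : ℕ} (hN : 0 < N) (hNd : N ≤ d) {r s : ℕ} (hr : r ≤ N) (hs : s ≤ d - N)
    (c : Finset (Fin d) → ℂ) (hnorm : normalized N c) (hsc : selfConsistent N c)
    (hord : ∀ i j : Fin d, i ≤ j → occ N c j ≤ occ N c i)
    (hpin : PauliS d r s (occ N c) = 0) :
    ∀ S ∈ configs d N,
      ((¬ ∀ i : Fin d, (i : ℕ) < r → i ∈ S) ∨ (∃ j ∈ S, d - s ≤ (j : ℕ))) →
      c S = 0 := by
  -- occ is a sum of |c S|² over configurations containing j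
  have occ_eq : ∀ j : Fin d,
      occ N c j = ∑ S ∈ (configs d N).filter (fun S => j ∈ S), ‖c S‖ ^ 2 := by
    intro j
    unfold occ rho
    have hfilter : (configs d N).filter (fun S => j ∈ S ∧ j ∉ S.erase j)
        = (configs d N).filter (fun S => j ∈ S) := by
      apply Finset.filter_congr
      intro S _
      simp [Finset.notMem_erase]
    rw [Matrix.of_apply, hfilter, Complex.re_sum]
    apply Finset.sum_congr rfl
    intro S hS
    have hjS : j ∈ S := (Finset.mem_filter.mp hS).2
    rw [Finset.insert_erase hjS]
    have heps : eps j S * eps j S = 1 := by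
      unfold eps
      rw [← pow_add, ← two_mul, pow_mul]
      norm_num
    rw [mul_assoc, mul_assoc, ← mul_assoc (eps j S), heps, one_mul,
      mul_comm ((starRingEnd ℂ) (c S)) (c S), Complex.mul_conj]
    simp [Complex.sq_norm]
  have hnonneg : ∀ j : Fin d, 0 ≤ occ N c j := by
    intro j
    rw [occ_eq]
    exact Finset.sum_nonneg fun S _ => sq_nonneg _
  have hle1 : ∀ j : Fin d, occ N c j ≤ 1 := by
    intro j
    rw [occ_eq, ← hnorm]
    exact Finset.sum_le_sum_of_subset_of_nonneg (Finset.filter_subset _ _)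
      (fun S _ _ => sq_nonneg _)
  -- split PauliS = 0 into the two sums being zero
  have h1 : ∀ i : Fin d, (i : ℕ) < r → occ N c i = 1 := by
    intro i hi
    have hA : 0 ≤ ∑ i ∈ Finset.univ.filter (fun i : Fin d => (i : ℕ) < r), (1 - occ N c i) :=
      Finset.sum_nonneg fun i _ => by linarith [hle1 i]
    have hB : 0 ≤ ∑ j ∈ Finset.univ.filter (fun j : Fin d => d - s ≤ (j : ℕ)), occ N c j :=
      Finset.sum_nonneg fun j _ => hnonneg j
    have hAz : ∑ i ∈ Finset.univ.filter (fun i : Fin d => (i : ℕ) < r), (1 - occ N c i) = 0 := by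
      unfold PauliS at hpin; linarith
    have := (Finset.sum_eq_zero_iff_of_nonneg (fun i _ => by linarith [hle1 i])).mp hAz i
      (by simp [hi])
    linarith
  have h2 : ∀ j : Fin d, d - s ≤ (j : ℕ) → occ N c j = 0 := by
    intro j hj
    have hA : 0 ≤ ∑ i ∈ Finset.univ.filter (fun i : Fin d => (i : ℕ) < r), (1 - occ N c i) :=
      Finset.sum_nonneg fun i _ => by linarith [hle1 i]
    have hB : 0 ≤ ∑ j ∈ Finset.univ.filter (fun j : Fin d => d - s ≤ (j : ℕ)), occ N c j :=
      Finset.sum_nonneg fun j _ => hnonneg j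
    have hBz : ∑ j ∈ Finset.univ.filter (fun j : Fin d => d - s ≤ (j : ℕ)), occ N c j = 0 := by
      unfold PauliS at hpin; linarith
    exact (Finset.sum_eq_zero_iff_of_nonneg (fun j _ => hnonneg j)).mp hBz j (by simp; omega)
  intro S hS hcond
  by_contra hcS
  have habs : 0 < ‖c S‖ ^ 2 := by
    have := norm_pos_iff.mpr hcS
    positivity
  rcases hcond with hmiss | ⟨j, hjS, hj⟩
  · push_neg at hmiss
    obtain ⟨i, hir, hiS⟩ := hmiss
    -- occ i = 1, but the sum over S ∋ i misses S, contradiction with normalization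
    have key : ∑ T ∈ (configs d N).filter (fun T => i ∈ T), ‖c T‖ ^ 2
        + ∑ T ∈ (configs d N).filter (fun T => i ∉ T), ‖c T‖ ^ 2 = 1 := by
      rw [Finset.sum_filter_add_sum_filter_not]
      exact hnorm
    have hocc : occ N c i = 1 := h1 i hir
    rw [occ_eq] at hocc
    have hz : ∑ T ∈ (configs d N).filter (fun T => i ∉ T), ‖c T‖ ^ 2 = 0 := by
      linarith
    have := (Finset.sum_eq_zero_iff_of_nonneg (fun T _ => sq_nonneg _)).mp hz S
      (Finset.mem_filter.mpr ⟨hS, hiS⟩)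
    linarith
  · have hocc := h2 j hj
    rw [occ_eq] at hocc
    have := (Finset.sum_eq_zero_iff_of_nonneg (fun T _ => sq_nonneg _)).mp hocc S
      (Finset.mem_filter.mpr ⟨hS, hjS⟩)
    linarith
end
end

section
/- Particle-hole duality: assume 0 < N < d. The set of all vectors arising as the non-increasingly ordered list of eigenvalues of ρ(c) as c ranges over all (d−N)-fermion coefficient vectors for the setting (d−N,d) is exactly the set of vectors (1 − n_{d+1−i})_{i=1,…,d}, where (n_1,…,n_d) ranges over all non-increasingly ordered lists of eigenvalues of ρ(c′) for N-fermion coefficient vectors c′ for the setting (N,d). -/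
open Finset

noncomputable section

/-! ### Auxiliary machinery for particle-hole duality -/

open Polynomial in
lemma charpoly_unitary_conj {d : ℕ} (U : Matrix.unitaryGroup (Fin d) ℂ)
    (D : Matrix (Fin d) (Fin d) ℂ) :
    ((U : Matrix (Fin d) (Fin d) ℂ) * D * star (U : Matrix (Fin d) (Fin d) ℂ)).charpoly
      = D.charpoly := by
  set M : Matrix (Fin d) (Fin d) ℂ := (U : Matrix (Fin d) (Fin d) ℂ) with hM
  have h1 : M * star M = 1 := Matrix.mem_unitaryGroup_iff.mp U.2
  set φ : Matrix (Fin d) (Fin d) ℂ →+* Matrix (Fin d) (Fin d) ℂ[X] :=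
    RingHom.mapMatrix (m := Fin d) (C : ℂ →+* ℂ[X]) with hφ
  have hsc : ∀ (A : Matrix (Fin d) (Fin d) ℂ[X]),
      Matrix.scalar (Fin d) (X : ℂ[X]) * A = A * Matrix.scalar (Fin d) (X : ℂ[X]) :=
    fun A => (Matrix.scalar_commute (X : ℂ[X]) (fun r' => Commute.all _ _) A).eq
  have key : (φ M) * Matrix.charmatrix D * (φ (star M))
      = Matrix.charmatrix (M * D * star M) := by
    rw [Matrix.charmatrix, Matrix.charmatrix, mul_sub, sub_mul]
    congr 1
    · rw [← hsc, mul_assoc, ← map_mul, h1, map_one, mul_one]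
    · rw [← map_mul, ← map_mul]
  have hdet := congrArg Matrix.det key
  rw [Matrix.det_mul, Matrix.det_mul] at hdet
  have hone : (φ M).det * (φ (star M)).det = 1 := by
    rw [← Matrix.det_mul, ← map_mul, h1, map_one, Matrix.det_one]
  rw [Matrix.charpoly, Matrix.charpoly, ← hdet]
  ring_nf
  rw [mul_comm ((φ M).det), mul_assoc]
  rw [hone, mul_one]

open Polynomial in
lemma herm_charpoly {d : ℕ} {A : Matrix (Fin d) (Fin d) ℂ} (hA : A.IsHermitian) :
    A.charpoly = ∏ i, (X - C ((hA.eigenvalues i : ℝ) : ℂ)) := by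
  have hsp := hA.spectral_theorem
  conv_lhs => rw [hsp]
  rw [Unitary.conjStarAlgAut_apply, charpoly_unitary_conj]
  have : (Matrix.diagonal (RCLike.ofReal ∘ hA.eigenvalues)
      : Matrix (Fin d) (Fin d) ℂ).BlockTriangular id :=
    Matrix.blockTriangular_diagonal _
  rw [Matrix.charpoly_of_upperTriangular _ this]
  simp [Matrix.diagonal_apply_eq]

lemma exists_perm_of_map_eq {α β : Type*} [Fintype α] [DecidableEq α] [DecidableEq β]
    {f g : α → β} (h : Multiset.map f Finset.univ.val = Multiset.map g Finset.univ.val) :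
    ∃ σ : Equiv.Perm α, ∀ a, f a = g (σ a) := by
  have hcard : ∀ b, Fintype.card {a // f a = b} = Fintype.card {a // g a = b} := by
    intro b
    have := congrArg (Multiset.count b) h
    rw [Multiset.count_map, Multiset.count_map] at this
    simpa [Fintype.card_subtype, Finset.filter_val, eq_comm, Finset.card_def] using this
  classical
  let e : ∀ b, {a // f a = b} ≃ {a // g a = b} := fun b => Fintype.equivOfCardEq (hcard b)
  exact ⟨Equiv.ofFiberEquiv e, fun a => (Equiv.ofFiberEquiv_map e a).symm⟩

open Polynomial in
lemma eig_one_sub {d : ℕ} {A B : Matrix (Fin d) (Fin d) ℂ} (hA : A.IsHermitian)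
    (hB : B.IsHermitian) (hAB : B = 1 - A) :
    ∃ π : Equiv.Perm (Fin d), ∀ i, hB.eigenvalues i = 1 - hA.eigenvalues (π i) := by
  have hB1 : B.charpoly = ∏ i, (X - C ((hB.eigenvalues i : ℝ) : ℂ)) := herm_charpoly hB
  have hB2 : B.charpoly = ∏ i, (X - C ((1 : ℂ) - (hA.eigenvalues i : ℂ))) := by
    have hdiag : Matrix.diagonal (fun i => (1 : ℂ) - (hA.eigenvalues i : ℂ))
        = 1 - Matrix.diagonal (RCLike.ofReal ∘ hA.eigenvalues) := by
      ext i j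
      by_cases hij : i = j <;>
        simp [hij, Matrix.diagonal_apply_ne, Matrix.one_apply, Function.comp]
    have hBdec : (hA.eigenvectorUnitary : Matrix (Fin d) (Fin d) ℂ)
        * Matrix.diagonal (fun i => (1 : ℂ) - (hA.eigenvalues i : ℂ))
        * star (hA.eigenvectorUnitary : Matrix (Fin d) (Fin d) ℂ) = B := by
      rw [hAB, hdiag, mul_sub, sub_mul, mul_one,
        Matrix.mem_unitaryGroup_iff.mp hA.eigenvectorUnitary.2, ← Unitary.conjStarAlgAut_apply (S := ℂ),
          ← hA.spectral_theorem]
    rw [← hBdec]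
    rw [charpoly_unitary_conj, Matrix.charpoly_of_upperTriangular _
      (Matrix.blockTriangular_diagonal _)]
    simp
  have hroots := congrArg Polynomial.roots (hB1.symm.trans hB2)
  have key : Multiset.map (fun i => ((hB.eigenvalues i : ℝ) : ℂ)) Finset.univ.val
      = Multiset.map (fun i => (1 : ℂ) - (hA.eigenvalues i : ℂ)) Finset.univ.val := by
    have e1 : ∀ (h : Fin d → ℂ), (∏ i, (X - C (h i)))
        = (Multiset.map (fun a => X - C a) (Multiset.map h Finset.univ.val)).prod := by
      intro h
      rw [Multiset.map_map]
      rfl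
    rw [e1, e1, Polynomial.roots_multiset_prod_X_sub_C,
      Polynomial.roots_multiset_prod_X_sub_C] at hroots
    exact hroots
  obtain ⟨σ, hσ⟩ := exists_perm_of_map_eq key
  refine ⟨σ, fun i => ?_⟩
  have h2 : ((hB.eigenvalues i : ℝ) : ℂ) = (((1 : ℝ) - hA.eigenvalues (σ i) : ℝ) : ℂ) := by
    push_cast
    exact hσ i
  exact_mod_cast h2

/-- The particle-hole dual coefficient vector. -/
def dualC {d : ℕ} (c : Finset (Fin d) → ℂ) : Finset (Fin d) → ℂ :=
  fun T => (-1 : ℂ) ^ (∑ t ∈ T, (t : ℕ)) * (starRingEnd ℂ) (c Tᶜ)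

lemma mem_configs {d N : ℕ} {S : Finset (Fin d)} : S ∈ configs d N ↔ S.card = N := by
  simp [configs]

lemma eps_sq {d : ℕ} (k : Fin d) (R : Finset (Fin d)) : eps k R * eps k R = 1 := by
  rw [eps, ← pow_add]
  exact Even.neg_one_pow ⟨_, rfl⟩

lemma conj_eps {d : ℕ} (k : Fin d) (R : Finset (Fin d)) :
    (starRingEnd ℂ) (eps k R) = eps k R := by
  rw [eps]; simp

lemma conj_mul_self (z : ℂ) : (starRingEnd ℂ) z * z = ((‖z‖ ^ 2 : ℝ) : ℂ) := by
  rw [mul_comm, Complex.mul_conj, Complex.sq_norm]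

lemma conj_mul_self_dual {d : ℕ} (c : Finset (Fin d) → ℂ) (T : Finset (Fin d)) :
    (starRingEnd ℂ) (dualC c T) * dualC c T = (starRingEnd ℂ) (c Tᶜ) * c Tᶜ := by
  rw [conj_mul_self, conj_mul_self]
  congr 2
  rw [dualC, norm_mul]
  simp [norm_pow]

lemma normalized_conj_sum {d M : ℕ} {c : Finset (Fin d) → ℂ} (h : normalized M c) :
    ∑ S ∈ configs d M, (starRingEnd ℂ) (c S) * c S = 1 := by
  have h2 := congrArg (Complex.ofReal) h
  push_cast at h2
  rw [← h2]
  exact Finset.sum_congr rfl fun S _ => by rw [conj_mul_self]; push_cast; ring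

lemma filter_compl_card_add {d : ℕ} (S : Finset (Fin d)) (i : Fin d) :
    ((Sᶜ).filter (fun r => r < i)).card + (S.filter (fun r => r < i)).card = i.val := by
  classical
  rw [← Finset.card_union_of_disjoint
    (Finset.disjoint_filter_filter disjoint_compl_left), ← Finset.filter_union]
  have h1 : (Sᶜ ∪ S : Finset (Fin d)) = Finset.univ := by
    rw [Finset.union_comm, Finset.union_compl]
  rw [h1]
  have h2 : (Finset.univ.filter (fun r => r < i) : Finset (Fin d)) = Finset.Iio i := by
    ext r; simp
  rw [h2, Fin.card_Iio]

lemma neg_one_pow_odd_rel {m n : ℕ} (h : (m + n) % 2 = 1) : (-1 : ℂ) ^ m = -(-1) ^ n := by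
  have h1 : (-1 : ℂ) ^ (m + n) = -1 := Odd.neg_one_pow (Nat.odd_iff.mpr h)
  have h2 : (-1 : ℂ) ^ n * (-1) ^ n = 1 := by
    rw [← pow_add]; exact Even.neg_one_pow ⟨n, rfl⟩
  calc (-1 : ℂ) ^ m = (-1) ^ m * ((-1) ^ n * (-1) ^ n) := by rw [h2, mul_one]
    _ = (-1 : ℂ) ^ (m + n) * (-1) ^ n := by rw [pow_add]; ring
    _ = -(-1) ^ n := by rw [h1]; ring

lemma key_sign {d : ℕ} {i j : Fin d} (hij : i ≠ j) {S : Finset (Fin d)}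
    (hjS : j ∈ S) (hiS : i ∉ S) :
    eps i Sᶜ * eps j (insert j (Sᶜ.erase i)) * ((-1 : ℂ) ^ (∑ t ∈ insert j (Sᶜ.erase i), (t : ℕ)) *
      (-1 : ℂ) ^ (∑ t ∈ Sᶜ, (t : ℕ)))
      = -(eps j S * eps i (insert i (S.erase j))) := by
  classical
  set S' : Finset (Fin d) := insert i (S.erase j) with hS'
  have hTS : insert j ((Sᶜ).erase i) = S'ᶜ := by
    rw [hS', Finset.compl_insert, Finset.compl_erase, Finset.erase_insert_of_ne hij.symm]
  set a1 := ((Sᶜ).filter (fun r => r < i)).card with ha1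
  set a2 := ((insert j ((Sᶜ).erase i)).filter (fun r => r < j)).card with ha2
  set m1 := ∑ t ∈ insert j ((Sᶜ).erase i), (t : ℕ) with hm1
  set m2 := ∑ t ∈ Sᶜ, (t : ℕ) with hm2
  set b1 := (S.filter (fun r => r < j)).card with hb1
  set b2 := (S'.filter (fun r => r < i)).card with hb2
  set c1 := (S.filter (fun r => r < i)).card with hc1
  set c2 := (S'.filter (fun r => r < j)).card with hc2
  have F1 : a1 + c1 = i.val := filter_compl_card_add S i
  have F2 : a2 + c2 = j.val := by
    rw [ha2, hc2, hTS]; exact filter_compl_card_add S' j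
  have F3 : c2 = b1 + (if i < j then 1 else 0) := by
    rw [hc2, hS', Finset.filter_insert, Finset.filter_erase]
    have hjn : j ∉ S.filter (fun r => r < j) := by simp
    rw [Finset.erase_eq_of_notMem hjn]
    by_cases hlt : i < j
    · rw [if_pos hlt, if_pos hlt, Finset.card_insert_of_notMem (by simp [hiS])]
    · rw [if_neg hlt, if_neg hlt, add_zero]
  have F4 : c1 = b2 + (if j < i then 1 else 0) := by
    rw [hb2, hS', Finset.filter_insert, if_neg (lt_irrefl i), Finset.filter_erase]
    by_cases hlt : j < i
    · rw [if_pos hlt, Finset.card_erase_of_mem (by simp [hjS, hlt])]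
      have : 1 ≤ c1 := Finset.card_pos.mpr ⟨j, by simp [hjS, hlt]⟩
      omega
    · rw [if_neg hlt, Finset.erase_eq_of_notMem (by simp [hlt]), add_zero]
  have hjc : j ∉ (Sᶜ).erase i := by simp [hjS]
  have hic : i ∈ Sᶜ := by simp [hiS]
  have F5 : m1 + m2 = i.val + j.val + 2 * (∑ t ∈ (Sᶜ).erase i, (t : ℕ)) := by
    rw [hm1, hm2, Finset.sum_insert hjc, ← Finset.sum_erase_add _ _ hic]
    omega
  have hodd : ((a1 + a2 + (m1 + m2)) + (b1 + b2)) % 2 = 1 := by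
    rcases lt_or_gt_of_ne hij with hlt | hlt
    · rw [if_pos hlt] at F3
      rw [if_neg (not_lt_of_gt hlt)] at F4
      omega
    · rw [if_neg (not_lt_of_gt hlt)] at F3
      rw [if_pos hlt] at F4
      omega
  show (-1 : ℂ) ^ a1 * (-1 : ℂ) ^ a2 * ((-1 : ℂ) ^ m1 * (-1 : ℂ) ^ m2)
      = -((-1 : ℂ) ^ b1 * (-1 : ℂ) ^ b2)
  rw [← pow_add, ← pow_add, ← pow_add, ← pow_add, neg_one_pow_odd_rel hodd]

lemma compl_mem_configs {d M N : ℕ} (hMN : M + N = d) {S : Finset (Fin d)}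
    (hS : S ∈ configs d M) : Sᶜ ∈ configs d N := by
  rw [mem_configs] at hS ⊢
  rw [Finset.card_compl, Fintype.card_fin, hS]
  omega

lemma rho_diag {d N : ℕ} (c : Finset (Fin d) → ℂ) (j : Fin d) :
    rho N c j j = ∑ S ∈ (configs d N).filter (fun S => j ∈ S),
      (starRingEnd ℂ) (c S) * c S := by
  rw [rho]
  show (∑ S ∈ (configs d N).filter (fun S => j ∈ S ∧ j ∉ S.erase j), _) = _
  rw [Finset.filter_congr (fun S _ => by
    simp [Finset.notMem_erase] : ∀ S ∈ configs d N,
      (j ∈ S ∧ j ∉ S.erase j) ↔ j ∈ S)]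
  refine Finset.sum_congr rfl fun S hS => ?_
  have hj : j ∈ S := (Finset.mem_filter.mp hS).2
  rw [Finset.insert_erase hj, mul_assoc (eps j S * eps j S), eps_sq, one_mul]

lemma term_eq {d : ℕ} {i j : Fin d} (hij : i ≠ j) {S : Finset (Fin d)}
    (hjS : j ∈ S) (hiS : i ∉ S) (c : Finset (Fin d) → ℂ) :
    eps i Sᶜ * eps j (insert j (Sᶜ.erase i)) *
        (starRingEnd ℂ) (dualC c (insert j (Sᶜ.erase i))) * dualC c Sᶜ
      = -(eps j S * eps i (insert i (S.erase j)) *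
          (c (insert i (S.erase j)) * (starRingEnd ℂ) (c S))) := by
  classical
  have hTS : (insert j ((Sᶜ).erase i))ᶜ = insert i (S.erase j) := by
    rw [Finset.compl_insert, Finset.compl_erase, compl_compl,
      Finset.erase_insert_of_ne hij]
  have hconjpow : ∀ m : ℕ, (starRingEnd ℂ) ((-1 : ℂ) ^ m) = (-1 : ℂ) ^ m := by
    intro m; simp
  have hstep : eps i Sᶜ * eps j (insert j (Sᶜ.erase i)) *
        (starRingEnd ℂ) (dualC c (insert j (Sᶜ.erase i))) * dualC c Sᶜ
      = (eps i Sᶜ * eps j (insert j (Sᶜ.erase i)) *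
          ((-1 : ℂ) ^ (∑ t ∈ insert j (Sᶜ.erase i), (t : ℕ)) *
            (-1 : ℂ) ^ (∑ t ∈ Sᶜ, (t : ℕ)))) *
          (c (insert i (S.erase j)) * (starRingEnd ℂ) (c S)) := by
    rw [dualC, dualC, map_mul, hconjpow, Complex.conj_conj, hTS, compl_compl]
    ring
  rw [hstep, key_sign hij hjS hiS]
  ring

lemma rho_dual {d M N : ℕ} (hMN : M + N = d) (c : Finset (Fin d) → ℂ)
    (hc : normalized M c) :
    rho N (dualC c) = 1 - (rho M c).conjTranspose := by
  classical
  ext i j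
  by_cases hij : i = j
  · subst hij
    rw [Matrix.sub_apply, Matrix.one_apply_eq, Matrix.conjTranspose_apply, rho_diag, rho_diag]
    rw [RCLike.star_def, map_sum]
    have hreidx : ∑ T ∈ (configs d N).filter (fun T => i ∈ T),
        (starRingEnd ℂ) (dualC c T) * dualC c T
        = ∑ S ∈ (configs d M).filter (fun S => i ∉ S), (starRingEnd ℂ) (c S) * c S := by
      refine Finset.sum_nbij' (fun T => Tᶜ) (fun S => Sᶜ) ?_ ?_ ?_ ?_ ?_
      · intro T hT
        rw [Finset.mem_filter] at hT ⊢
        exact ⟨compl_mem_configs (by omega) hT.1, by simpa using hT.2⟩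
      · intro S hS
        rw [Finset.mem_filter] at hS ⊢
        refine ⟨compl_mem_configs hMN hS.1, by simpa using hS.2⟩
      · intro T _; exact compl_compl T
      · intro S _; exact compl_compl S
      · intro T _; exact conj_mul_self_dual c T
    rw [hreidx]
    have hsplit := Finset.sum_filter_add_sum_filter_not (configs d M)
      (fun S => i ∈ S) (fun S => (starRingEnd ℂ) (c S) * c S)
    rw [normalized_conj_sum hc] at hsplit
    have hconjsum : ∑ S ∈ (configs d M).filter (fun S => i ∈ S),
        (starRingEnd ℂ) ((starRingEnd ℂ) (c S) * c S)
        = ∑ S ∈ (configs d M).filter (fun S => i ∈ S), (starRingEnd ℂ) (c S) * c S := by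
      refine Finset.sum_congr rfl fun S _ => ?_
      rw [map_mul, Complex.conj_conj, mul_comm]
    rw [hconjsum]
    linear_combination hsplit
  · rw [Matrix.sub_apply, Matrix.one_apply_ne hij, Matrix.conjTranspose_apply, zero_sub]
    rw [RCLike.star_def, rho, rho]
    simp only [Matrix.of_apply]
    have hreidx : ∑ T ∈ (configs d N).filter (fun T => i ∈ T ∧ j ∉ T.erase i),
        eps i T * eps j (insert j (T.erase i)) *
          (starRingEnd ℂ) (dualC c (insert j (T.erase i))) * dualC c T
        = ∑ S ∈ (configs d M).filter (fun S => j ∈ S ∧ i ∉ S.erase j),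
            -(eps j S * eps i (insert i (S.erase j)) *
              (c (insert i (S.erase j)) * (starRingEnd ℂ) (c S))) := by
      refine Finset.sum_nbij' (fun T => Tᶜ) (fun S => Sᶜ) ?_ ?_ ?_ ?_ ?_
      · intro T hT
        rw [Finset.mem_filter] at hT ⊢
        have hT1 := hT.1
        have hT2 := hT.2.1
        have hT3 := hT.2.2
        refine ⟨compl_mem_configs (by omega) hT1, ?_, ?_⟩
        · rw [Finset.mem_compl]
          intro hjT
          exact hT3 (Finset.mem_erase.mpr ⟨Ne.symm hij, hjT⟩)
        · rw [Finset.mem_erase, not_and_or]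
          right; simpa using hT2
      · intro S hS
        rw [Finset.mem_filter] at hS ⊢
        have hS1 := hS.1
        have hS2 := hS.2.1
        have hS3 := hS.2.2
        have hiS : i ∉ S := fun h => hS3 (Finset.mem_erase.mpr ⟨hij, h⟩)
        refine ⟨compl_mem_configs hMN hS1, Finset.mem_compl.mpr hiS, fun h => ?_⟩
        exact (Finset.mem_compl.mp (Finset.mem_erase.mp h).2) hS2
      · intro T _; exact compl_compl T
      · intro S _; exact compl_compl S
      · intro T hT
        rw [Finset.mem_filter] at hT
        have hT2 := hT.2.1
        have hT3 := hT.2.2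
        have hjT : j ∉ T := fun h => hT3 (Finset.mem_erase.mpr ⟨Ne.symm hij, h⟩)
        have := term_eq hij (S := Tᶜ) (Finset.mem_compl.mpr hjT)
          (fun h => (Finset.mem_compl.mp h) hT2) c
        rw [compl_compl] at this
        exact this
    rw [hreidx, map_sum, ← Finset.sum_neg_distrib]
    refine Finset.sum_congr rfl fun S _ => ?_
    rw [map_mul, map_mul, map_mul, conj_eps, conj_eps, Complex.conj_conj]
    ring

lemma normalized_dual {d M N : ℕ} (hMN : M + N = d) (c : Finset (Fin d) → ℂ)
    (hc : normalized M c) : normalized N (dualC c) := by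
  classical
  rw [normalized] at hc ⊢
  rw [← hc]
  refine Finset.sum_nbij' (fun T => Tᶜ) (fun S => Sᶜ) ?_ ?_ ?_ ?_ ?_
  · intro T hT; exact compl_mem_configs (by omega) hT
  · intro S hS; exact compl_mem_configs hMN hS
  · intro T _; exact compl_compl T
  · intro S _; exact compl_compl S
  · intro T _
    rw [dualC]
    simp [norm_pow]

lemma dual_spectrum {d M N : ℕ} (hMN : M + N = d) (c : Finset (Fin d) → ℂ)
    (hc : normalized M c) (lam : Fin d → ℝ) (hlam : isOrderedSpectrum M c lam) :
    normalized N (dualC c) ∧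
      isOrderedSpectrum N (dualC c) (fun i => 1 - lam i.rev) := by
  obtain ⟨hmono, hA, σ, hσ⟩ := hlam
  have hrho : rho N (dualC c) = 1 - (rho M c).conjTranspose := rho_dual hMN c hc
  have hrho2 : rho N (dualC c) = 1 - rho M c := by rw [hrho, hA]
  have hB : (rho N (dualC c)).IsHermitian := by
    rw [hrho2]; exact Matrix.isHermitian_one.sub hA
  obtain ⟨π, hπ⟩ := eig_one_sub hA hB hrho2
  refine ⟨normalized_dual hMN c hc, ⟨?_, hB, (Fin.revPerm.trans σ).trans π⁻¹, fun i => ?_⟩⟩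
  · intro i j hij
    have h1 : j.rev ≤ i.rev := Fin.rev_le_rev.mpr hij
    have := hmono j.rev i.rev h1
    simp only []
    linarith
  · simp only [Equiv.trans_apply, Fin.revPerm_apply]
    have h1 := hπ (π⁻¹ (σ i.rev))
    simp only [Equiv.Perm.inv_def, Equiv.apply_symm_apply] at h1 ⊢
    rw [h1, ← hσ]


theorem stmt3 {d N : ℕ} (hN : 0 < N) (hNd : N < d) :
    {v : Fin d → ℝ | ∃ c : Finset (Fin d) → ℂ,
        normalized (d - N) c ∧ isOrderedSpectrum (d - N) c v} =
    {v : Fin d → ℝ | ∃ (c' : Finset (Fin d) → ℂ) (n : Fin d → ℝ),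
        normalized N c' ∧ isOrderedSpectrum N c' n ∧ ∀ i : Fin d, v i = 1 - n i.rev} := by
  classical
  ext v
  simp only [Set.mem_setOf_eq]
  constructor
  · rintro ⟨c, hc, hspec⟩
    obtain ⟨hc', hspec'⟩ := dual_spectrum (by omega : (d - N) + N = d) c hc v hspec
    refine ⟨dualC c, (fun i => 1 - v i.rev), hc', hspec', fun i => ?_⟩
    simp [Fin.rev_rev]
  · rintro ⟨c', n, hc', hspec', hv⟩
    obtain ⟨hc, hspec⟩ := dual_spectrum (by omega : N + (d - N) = d) c' hc' n hspec'
    refine ⟨dualC c', hc, ?_⟩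
    have hveq : v = fun i => 1 - n i.rev := funext hv
    rw [hveq]
    exact hspec
end
end
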